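/- Let E ∈ M_n(ℝ) be tropically idempotent of full rank n, and let G_E be the set of monomial matrices in M_n(ℝ ∪ {-∞}) that commute with E. Then the map G ↦ E ⊗ G is an injective group homomorphism from G_E into the H-class H_E of E, and in fact a group isomorphism onto H_E. -/

import Mathlib

open Finset Matrix

/-- Tropical (max-plus) matrix multiplication on n × n real matrices. -/
noncomputable def tmul {n : ℕ} [NeZero n] (A B : Matrix (Fin n) (Fin n) ℝ) :
    Matrix (Fin n) (Fin n) ℝ :=
  fun i j => univ.sup' univ_nonempty (fun k => A i k + B k j)

/-- Tropical action of a matrix on a vector: (A ⊗ x)_i = max_k (A_{i,k} + x_k). -/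
noncomputable def tvec {n : ℕ} [NeZero n] (A : Matrix (Fin n) (Fin n) ℝ) (x : Fin n → ℝ) :
    Fin n → ℝ :=
  fun i => univ.sup' univ_nonempty (fun k => A i k + x k)

/-- Tropical column space: all tropical linear combinations of columns of A. -/
noncomputable def colSpace {n : ℕ} [NeZero n] (A : Matrix (Fin n) (Fin n) ℝ) :
    Set (Fin n → ℝ) :=
  Set.range (tvec A)

/-- The H-class of E: matrices with the same row space and column space as E. -/
noncomputable def Hclass {n : ℕ} [NeZero n] (E : Matrix (Fin n) (Fin n) ℝ) :
    Set (Matrix (Fin n) (Fin n) ℝ) :=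
  {A | colSpace A = colSpace E ∧ colSpace Aᵀ = colSpace Eᵀ}

/-- Tropical (max-plus) matrix multiplication over 𝕋 = ℝ ∪ {-∞} = WithBot ℝ. -/
noncomputable def tmulT {n : ℕ} (A B : Matrix (Fin n) (Fin n) (WithBot ℝ)) :
    Matrix (Fin n) (Fin n) (WithBot ℝ) :=
  fun i j => univ.sup (fun k => A i k + B k j)

/-- A tropical monomial (unit) matrix. -/
def IsMonomial {n : ℕ} (G : Matrix (Fin n) (Fin n) (WithBot ℝ)) : Prop :=
  ∃ (σ : Equiv.Perm (Fin n)) (lam : Fin n → ℝ),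
    ∀ i j, G i j = if j = σ i then (lam i : WithBot ℝ) else ⊥

/-- Embedding of a real matrix into matrices over ℝ ∪ {-∞}. -/
def emb {n : ℕ} (A : Matrix (Fin n) (Fin n) ℝ) : Matrix (Fin n) (Fin n) (WithBot ℝ) :=
  A.map (fun a => (a : WithBot ℝ))

set_option linter.unusedSectionVars false
set_option linter.unusedVariables false
set_option linter.unusedTactic false
set_option maxHeartbeats 1000000
section Aux
variable {n : ℕ} [NeZero n]

lemma sup'_perm (f : Fin n → ℝ) (σ : Equiv.Perm (Fin n)) :
    univ.sup' univ_nonempty f = univ.sup' univ_nonempty (fun k => f (σ k)) := by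
  apply le_antisymm
  · apply Finset.sup'_le
    intro k _
    have := Finset.le_sup' (fun k => f (σ k)) (Finset.mem_univ (σ.symm k))
    exact le_trans (by simp) this
  · apply Finset.sup'_le
    intro k _
    exact Finset.le_sup' f (Finset.mem_univ (σ k))

lemma bot_add_sup (a : WithBot ℝ) (f : Fin n → WithBot ℝ) :
    a + univ.sup f = univ.sup (fun k => a + f k) := by
  obtain ⟨k₀, -, hk₀⟩ := Finset.exists_mem_eq_sup (univ : Finset (Fin n)) univ_nonempty f
  apply le_antisymm
  · rw [hk₀]
    exact Finset.le_sup (f := fun k => a + f k) (Finset.mem_univ k₀)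
  · exact Finset.sup_le fun k _ => add_le_add le_rfl (Finset.le_sup (Finset.mem_univ k))

lemma sup_add_bot (a : WithBot ℝ) (f : Fin n → WithBot ℝ) :
    univ.sup f + a = univ.sup (fun k => f k + a) := by
  rw [add_comm, bot_add_sup]; simp [add_comm]

lemma tmulT_assoc (A B C : Matrix (Fin n) (Fin n) (WithBot ℝ)) :
    tmulT (tmulT A B) C = tmulT A (tmulT B C) := by
  funext i j
  show univ.sup (fun k => univ.sup (fun l => A i l + B l k) + C k j)
      = univ.sup (fun l => A i l + univ.sup (fun k => B l k + C k j))
  simp only [sup_add_bot, bot_add_sup, add_assoc]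
  exact Finset.sup_comm _ _ _

lemma emb_inj : Function.Injective (emb (n := n)) := by
  intro A B h
  funext i j
  have := congrFun (congrFun h i) j
  simpa [emb, Matrix.map_apply] using this

lemma emb_tmulT (A B : Matrix (Fin n) (Fin n) ℝ) :
    tmulT (emb A) (emb B) = emb (tmul A B) := by
  funext i j
  show univ.sup (fun k => ((A i k : WithBot ℝ) + (B k j : WithBot ℝ)))
      = ((univ.sup' univ_nonempty (fun k => A i k + B k j) : ℝ) : WithBot ℝ)
  rw [Finset.coe_sup']
  exact Finset.sup_congr rfl (fun k _ => by simp)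

lemma sup_single (f : Fin n → WithBot ℝ) (k₀ : Fin n) (h : ∀ k, k ≠ k₀ → f k = ⊥) :
    univ.sup f = f k₀ := by
  apply le_antisymm
  · apply Finset.sup_le
    intro k _
    by_cases hk : k = k₀
    · subst hk; exact le_rfl
    · simp [h k hk]
  · exact Finset.le_sup (Finset.mem_univ k₀)

lemma emb_mul_mono (E : Matrix (Fin n) (Fin n) ℝ) (G : Matrix (Fin n) (Fin n) (WithBot ℝ))
    (σ : Equiv.Perm (Fin n)) (lam : Fin n → ℝ)
    (hG : ∀ i j, G i j = if j = σ i then (lam i : WithBot ℝ) else ⊥) :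
    tmulT (emb E) G = emb (fun i j => E i (σ.symm j) + lam (σ.symm j)) := by
  funext i j
  show univ.sup (fun k => (E i k : WithBot ℝ) + G k j) = _
  rw [sup_single _ (σ.symm j)]
  · simp [hG, emb, Matrix.map_apply, WithBot.coe_add, Matrix.map]
  · intro k hk
    have : j ≠ σ k := fun h => hk (by simp [h])
    simp [hG, this]

lemma mono_mul_emb (E : Matrix (Fin n) (Fin n) ℝ) (G : Matrix (Fin n) (Fin n) (WithBot ℝ))
    (σ : Equiv.Perm (Fin n)) (lam : Fin n → ℝ)
    (hG : ∀ i j, G i j = if j = σ i then (lam i : WithBot ℝ) else ⊥) :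
    tmulT G (emb E) = emb (fun i j => lam i + E (σ i) j) := by
  funext i j
  show univ.sup (fun k => G i k + (E k j : WithBot ℝ)) = _
  rw [sup_single _ (σ i)]
  · simp [hG, emb, Matrix.map_apply, WithBot.coe_add, Matrix.map]
  · intro k hk
    simp [hG, hk]

lemma mono_mul_mono (G H : Matrix (Fin n) (Fin n) (WithBot ℝ))
    (σ τ : Equiv.Perm (Fin n)) (lam mu : Fin n → ℝ)
    (hG : ∀ i j, G i j = if j = σ i then (lam i : WithBot ℝ) else ⊥)
    (hH : ∀ i j, H i j = if j = τ i then (mu i : WithBot ℝ) else ⊥) :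
    ∀ i j, tmulT G H i j = if j = τ (σ i) then ((lam i + mu (σ i) : ℝ) : WithBot ℝ) else ⊥ := by
  intro i j
  show univ.sup (fun k => G i k + H k j) = _
  rw [sup_single _ (σ i)]
  · rw [hG, hH]
    by_cases hj : j = τ (σ i) <;> simp [hj, WithBot.coe_add]
  · intro k hk
    simp [hG, hk]

end Aux

section RealSide
variable {n : ℕ} [NeZero n]

lemma tri {E : Matrix (Fin n) (Fin n) ℝ} (hE : tmul E E = E) (i k j : Fin n) :
    E i k + E k j ≤ E i j := by
  conv_rhs => rw [← hE]
  exact Finset.le_sup' (fun k => E i k + E k j) (Finset.mem_univ k)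

lemma eq_of_cycle {E : Matrix (Fin n) (Fin n) ℝ} (hE : tmul E E = E)
    (hcols : ∀ i j (α : ℝ), i ≠ j → (fun k => E k i) ≠ (fun k => α + E k j))
    {a b : Fin n} (h : E a b + E b a = 0) : a = b := by
  by_contra hab
  apply hcols b a (E a b) (fun hba => hab hba.symm)
  funext k
  have h1 := tri hE k a b
  have h2 := tri hE k b a
  show E k b = E a b + E k a
  linarith

lemma exists_tvec_col (A : Matrix (Fin n) (Fin n) ℝ) (j : Fin n) :
    ∃ x : Fin n → ℝ, tvec A x = fun i => A i j := by
  set M : ℝ := univ.sup' univ_nonempty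
      (fun i => univ.sup' univ_nonempty (fun k => A i k - A i j)) with hM
  refine ⟨fun k => if k = j then 0 else -M, ?_⟩
  funext i
  show univ.sup' univ_nonempty (fun k => A i k + _) = A i j
  apply le_antisymm
  · apply Finset.sup'_le
    intro k _
    by_cases hk : k = j
    · simp [hk]
    · rw [if_neg hk]
      have h1 : A i k - A i j ≤ M := by
        rw [hM]
        calc A i k - A i j ≤ univ.sup' univ_nonempty (fun k => A i k - A i j) :=
              Finset.le_sup' (fun m => A i m - A i j) (Finset.mem_univ k)
          _ ≤ _ := Finset.le_sup' (fun i => univ.sup' univ_nonempty (fun k => A i k - A i j))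
              (Finset.mem_univ i)
      linarith
  · have := Finset.le_sup' (fun k => A i k + (if k = j then (0:ℝ) else -M)) (Finset.mem_univ j)
    exact le_trans (by simp) this

lemma tvec_tmul (E B : Matrix (Fin n) (Fin n) ℝ) (x : Fin n → ℝ) :
    tvec (tmul E B) x = tvec E (tvec B x) := by
  funext i
  show univ.sup' univ_nonempty (fun k => univ.sup' univ_nonempty (fun m => E i m + B m k) + x k)
      = univ.sup' univ_nonempty (fun m => E i m + univ.sup' univ_nonempty (fun k => B m k + x k))
  have h1 : ∀ k, univ.sup' univ_nonempty (fun m => E i m + B m k) + x k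
      = univ.sup' univ_nonempty (fun m => E i m + B m k + x k) := by
    intro k; exact Finset.sup'_add _ _ _ _
  have h2 : ∀ m, E i m + univ.sup' univ_nonempty (fun k => B m k + x k)
      = univ.sup' univ_nonempty (fun k => E i m + (B m k + x k)) := by
    intro m; exact Finset.add_sup' _ _ _ _
  simp only [h1, h2, add_assoc]
  exact Finset.sup'_comm univ_nonempty univ_nonempty _

lemma tmul_fix_of_colSpace_sub {E A : Matrix (Fin n) (Fin n) ℝ} (hE : tmul E E = E)
    (h : Set.range (tvec A) ⊆ Set.range (tvec E)) : tmul E A = A := by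
  have hfix : ∀ x, tvec E (tvec A x) = tvec A x := by
    intro x
    obtain ⟨y, hy⟩ := h ⟨x, rfl⟩
    rw [← hy, ← tvec_tmul, hE]
  funext i j
  obtain ⟨x, hx⟩ := exists_tvec_col A j
  have := congrFun (hfix x) i
  rw [hx] at this
  simpa [tvec, tmul] using this

lemma tmul_transpose (A B : Matrix (Fin n) (Fin n) ℝ) :
    (tmul A B)ᵀ = tmul Bᵀ Aᵀ := by
  funext i j
  show univ.sup' univ_nonempty (fun k => A j k + B k i)
      = univ.sup' univ_nonempty (fun k => B k i + A j k)
  simp [add_comm]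

lemma colForm {E A : Matrix (Fin n) (Fin n) ℝ} (hE : tmul E E = E)
    (hdiag : ∀ i, E i i = 0)
    (hcols : ∀ i j (α : ℝ), i ≠ j → (fun k => E k i) ≠ (fun k => α + E k j))
    (hAE : Set.range (tvec A) = Set.range (tvec E)) (hfix : tmul E A = A) :
    ∃ (σ : Equiv.Perm (Fin n)) (lam : Fin n → ℝ),
      ∀ i j, A i j = E i (σ.symm j) + lam (σ.symm j) := by
  have key : ∀ j, ∃ k c, ∀ i, E i j = A i k + c := by
    intro j
    have hcol : (fun i => E i j) ∈ Set.range (tvec A) := by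
      rw [hAE]; exact exists_tvec_col E j
    obtain ⟨y, hy⟩ := hcol
    obtain ⟨k₀, -, hk₀⟩ := Finset.exists_mem_eq_sup' univ_nonempty (fun k => A j k + y k)
    have h0 : A j k₀ + y k₀ = 0 := by
      have hj := congrFun hy j
      show _ = (0:ℝ)
      rw [← hk₀]
      calc univ.sup' univ_nonempty (fun k => A j k + y k) = tvec A y j := rfl
        _ = E j j := hj
        _ = 0 := hdiag j
    refine ⟨k₀, y k₀, fun i => ?_⟩
    have hub : A i k₀ + y k₀ ≤ E i j := by
      rw [← congrFun hy i]
      exact Finset.le_sup' (fun k => A i k + y k) (Finset.mem_univ k₀)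
    have hlb : E i j + A j k₀ ≤ A i k₀ := by
      conv_rhs => rw [← hfix]
      exact Finset.le_sup' (fun m => E i m + A m k₀) (Finset.mem_univ j)
    linarith
  choose f c hfc using key
  have hinj : Function.Injective f := by
    intro j1 j2 hj
    by_contra hne
    apply hcols j1 j2 (c j1 - c j2) hne
    funext i
    have h1 := hfc j1 i
    have h2 := hfc j2 i
    rw [hj] at h1
    show E i j1 = c j1 - c j2 + E i j2
    linarith
  let σ : Equiv.Perm (Fin n) := Equiv.ofBijective f (Finite.injective_iff_bijective.mp hinj)
  refine ⟨σ, fun m => -(c m), fun i j => ?_⟩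
  have hm := hfc (σ.symm j) i
  have hfσ : f (σ.symm j) = j := σ.apply_symm_apply j
  rw [hfσ] at hm
  simp only
  linarith

end RealSide

/-- Let E ∈ M_n(ℝ) be tropically idempotent of full rank n, and let G_E be the
set of monomial matrices over ℝ ∪ {-∞} commuting with E. Then G ↦ E ⊗ G is an
injective multiplicative map from G_E whose image, identified with real
matrices, is exactly the H-class H_E of E; i.e. it is a group isomorphism
from G_E onto H_E. -/
theorem units_commuting_iso_Hclass {n : ℕ} [NeZero n]
    (E : Matrix (Fin n) (Fin n) ℝ) (hE : tmul E E = E)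
    (hdiag : ∀ i, E i i = 0)
    (hcols : ∀ i j (α : ℝ), i ≠ j → (fun k => E k i) ≠ (fun k => α + E k j)) :
    (∀ G : Matrix (Fin n) (Fin n) (WithBot ℝ),
      IsMonomial G → tmulT G (emb E) = tmulT (emb E) G →
        ∃ A ∈ Hclass E, emb A = tmulT (emb E) G) ∧
    (∀ G H : Matrix (Fin n) (Fin n) (WithBot ℝ),
      IsMonomial G → tmulT G (emb E) = tmulT (emb E) G →
      IsMonomial H → tmulT H (emb E) = tmulT (emb E) H →
        tmulT (emb E) G = tmulT (emb E) H → G = H) ∧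
    (∀ G H : Matrix (Fin n) (Fin n) (WithBot ℝ),
      IsMonomial G → tmulT G (emb E) = tmulT (emb E) G →
      IsMonomial H → tmulT H (emb E) = tmulT (emb E) H →
        tmulT (emb E) (tmulT G H) = tmulT (tmulT (emb E) G) (tmulT (emb E) H)) ∧
    (∀ A ∈ Hclass E, ∃ G : Matrix (Fin n) (Fin n) (WithBot ℝ),
      IsMonomial G ∧ tmulT G (emb E) = tmulT (emb E) G ∧ emb A = tmulT (emb E) G) := by
  have hET : tmul Eᵀ Eᵀ = Eᵀ := by rw [← tmul_transpose, hE]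
  have hdiagT : ∀ i, Eᵀ i i = 0 := hdiag
  have hcolsT : ∀ i j (α : ℝ), i ≠ j → (fun k => Eᵀ k i) ≠ (fun k => α + Eᵀ k j) := by
    intro i j α hij hcontra
    have h1 : ∀ k, E i k = α + E j k := fun k => congrFun hcontra k
    have hii := h1 i
    have hjj := h1 j
    rw [hdiag i] at hii
    rw [hdiag j] at hjj
    exact hij (eq_of_cycle hE hcols (by linarith))
  have commReal : ∀ (G : Matrix (Fin n) (Fin n) (WithBot ℝ)) (σ : Equiv.Perm (Fin n))
      (lam : Fin n → ℝ),
      (∀ i j, G i j = if j = σ i then (lam i : WithBot ℝ) else ⊥) →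
      tmulT G (emb E) = tmulT (emb E) G →
      ∀ i j, lam i + E (σ i) j = E i (σ.symm j) + lam (σ.symm j) := by
    intro G σ lam hG hc i j
    rw [mono_mul_emb E G σ lam hG, emb_mul_mono E G σ lam hG] at hc
    exact congrFun (congrFun (emb_inj hc) i) j
  refine ⟨?_, ?_, ?_, ?_⟩
  · -- part 1
    intro G hmono hc
    obtain ⟨σ, lam, hG⟩ := hmono
    have hCR := commReal G σ lam hG hc
    refine ⟨fun i j => E i (σ.symm j) + lam (σ.symm j), ⟨?_, ?_⟩, ?_⟩
    · -- colSpace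
      have hswap : ∀ x, tvec (fun i j => E i (σ.symm j) + lam (σ.symm j)) x
          = tvec E (fun m => lam m + x (σ m)) := by
        intro x
        funext i
        show univ.sup' univ_nonempty (fun k => E i (σ.symm k) + lam (σ.symm k) + x k)
            = univ.sup' univ_nonempty (fun m => E i m + (lam m + x (σ m)))
        rw [sup'_perm (fun k => E i (σ.symm k) + lam (σ.symm k) + x k) σ]
        congr 1
        funext m
        simp only [σ.symm_apply_apply]
        ring
      apply subset_antisymm
      · rintro _ ⟨x, rfl⟩
        exact ⟨fun m => lam m + x (σ m), (hswap x).symm⟩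
      · rintro _ ⟨z, rfl⟩
        refine ⟨fun k => z (σ.symm k) - lam (σ.symm k), ?_⟩
        rw [hswap]
        congr 1
        funext m
        simp [σ.symm_apply_apply]
    · -- rowspace
      have hAalt : ∀ i j, (fun i j => E i (σ.symm j) + lam (σ.symm j)) i j
          = lam i + E (σ i) j := fun i j => (hCR i j).symm
      have hswap : ∀ x, tvec (fun i j => E i (σ.symm j) + lam (σ.symm j))ᵀ x
          = tvec Eᵀ (fun m => lam (σ.symm m) + x (σ.symm m)) := by
        intro x
        funext j
        show univ.sup' univ_nonempty (fun k => E k (σ.symm j) + lam (σ.symm j) + x k)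
            = univ.sup' univ_nonempty (fun m => E m j + (lam (σ.symm m) + x (σ.symm m)))
        have hfun : ∀ k, E k (σ.symm j) + lam (σ.symm j) + x k = lam k + E (σ k) j + x k := by
          intro k
          have := hCR k j
          linarith
        simp only [hfun]
        rw [sup'_perm (fun k => lam k + E (σ k) j + x k) σ.symm]
        congr 1
        funext m
        simp only [σ.apply_symm_apply]
        ring
      apply subset_antisymm
      · rintro _ ⟨x, rfl⟩
        exact ⟨fun m => lam (σ.symm m) + x (σ.symm m), (hswap x).symm⟩
      · rintro _ ⟨z, rfl⟩
        refine ⟨fun k => z (σ k) - lam k, ?_⟩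
        rw [hswap]
        congr 1
        funext m
        simp [σ.apply_symm_apply]
    · exact (emb_mul_mono E G σ lam hG).symm
  · -- part 2 : injectivity
    intro G H hGm hGc hHm hHc heq
    obtain ⟨σ, lam, hG⟩ := hGm
    obtain ⟨τ, mu, hH⟩ := hHm
    rw [emb_mul_mono E G σ lam hG, emb_mul_mono E H τ mu hH] at heq
    have hR : ∀ i j, E i (σ.symm j) + lam (σ.symm j) = E i (τ.symm j) + mu (τ.symm j) :=
      fun i j => congrFun (congrFun (emb_inj heq) i) j
    have hperm : ∀ j, σ.symm j = τ.symm j := by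
      intro j
      by_contra hne
      apply hcols (σ.symm j) (τ.symm j) (mu (τ.symm j) - lam (σ.symm j)) hne
      funext i
      have := hR i j
      show E i (σ.symm j) = mu (τ.symm j) - lam (σ.symm j) + E i (τ.symm j)
      linarith
    have hστ : ∀ k, σ k = τ k := by
      intro k
      have := hperm (σ k)
      rw [σ.symm_apply_apply] at this
      conv_lhs => rw [← τ.apply_symm_apply (σ k), ← this]
    have hlam : ∀ k, lam k = mu k := by
      intro k
      have h1 := hR (σ k) (σ k)
      rw [σ.symm_apply_apply] at h1
      have h2 := hperm (σ k)
      rw [σ.symm_apply_apply] at h2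
      rw [← h2] at h1
      linarith
    funext i j
    rw [hG, hH, hστ i, hlam i]
  · -- part 3 : multiplicativity
    have hEE : tmulT (emb E) (emb E) = emb E := by rw [emb_tmulT, hE]
    intro G H hGm hGc hHm hHc
    calc tmulT (emb E) (tmulT G H) = tmulT (tmulT (emb E) G) H := (tmulT_assoc _ _ _).symm
      _ = tmulT (tmulT G (emb E)) H := by rw [hGc]
      _ = tmulT G (tmulT (emb E) H) := tmulT_assoc _ _ _
      _ = tmulT G (tmulT (tmulT (emb E) (emb E)) H) := by rw [hEE]
      _ = tmulT G (tmulT (emb E) (tmulT (emb E) H)) := by rw [tmulT_assoc]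
      _ = tmulT (tmulT G (emb E)) (tmulT (emb E) H) := (tmulT_assoc _ _ _).symm
      _ = tmulT (tmulT (emb E) G) (tmulT (emb E) H) := by rw [hGc]
  · -- part 4 : surjectivity
    intro A hA
    obtain ⟨hcolA, hrowA⟩ := hA
    have hfixc : tmul E A = A := tmul_fix_of_colSpace_sub hE (le_of_eq hcolA)
    have hfixr : tmul Eᵀ Aᵀ = Aᵀ := tmul_fix_of_colSpace_sub hET (le_of_eq hrowA)
    obtain ⟨σ, lam, hcolF⟩ := colForm hE hdiag hcols hcolA hfixc
    obtain ⟨τ', gam', hrowF⟩ := colForm hET hdiagT hcolsT hrowA hfixr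
    set τ : Equiv.Perm (Fin n) := τ'.symm with hτ
    set γ : Fin n → ℝ := fun i => gam' (τ'.symm i) with hγdef
    have hrow : ∀ i j, A i j = γ i + E (τ i) j := by
      intro i j
      have := hrowF j i
      show A i j = gam' (τ'.symm i) + E (τ'.symm i) j
      simp only [Matrix.transpose_apply] at this
      linarith
    have h2 : ∀ a b, E a b + lam b = γ a + E (τ a) (σ b) := by
      intro a b
      have hc := hcolF a (σ b)
      rw [σ.symm_apply_apply] at hc
      have hr := hrow a (σ b)
      linarith
    have h5 : ∀ j, E (τ.symm j) (σ.symm j) = γ (τ.symm j) - lam (σ.symm j) := by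
      intro j
      have := h2 (τ.symm j) (σ.symm j)
      rw [τ.apply_symm_apply, σ.apply_symm_apply, hdiag] at this
      linarith
    have hzero : ∀ i, E (τ i) (σ i) + E (σ i) (τ i) = 0 := by
      intro i
      have hub : E (τ i) (σ i) + E (σ i) (τ i) ≤ 0 := by
        have := tri hE (τ i) (σ i) (τ i)
        rw [hdiag] at this
        exact this
      have hF : E (τ i) (σ i) = lam i - γ i := by
        have := h2 i i
        rw [hdiag] at this
        linarith
      have hF' : E (σ i) (τ i)
          = E (τ.symm (σ i)) (σ.symm (τ i)) + lam (σ.symm (τ i)) - γ (τ.symm (σ i)) := by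
        have := h2 (τ.symm (σ i)) (σ.symm (τ i))
        rw [τ.apply_symm_apply, σ.apply_symm_apply] at this
        linarith
      have htri2 : E (τ.symm (σ i)) i + E i (σ.symm (τ i)) ≤ E (τ.symm (σ i)) (σ.symm (τ i)) :=
        tri hE (τ.symm (σ i)) i (σ.symm (τ i))
      have e1 : E (τ.symm (σ i)) i = γ (τ.symm (σ i)) - lam i := by
        have := h5 (σ i)
        rw [σ.symm_apply_apply] at this
        exact this
      have e2 : E i (σ.symm (τ i)) = γ i - lam (σ.symm (τ i)) := by
        have := h5 (τ i)
        rw [τ.symm_apply_apply] at this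
        exact this
      linarith
    have hστ : ∀ i, τ i = σ i := fun i => eq_of_cycle hE hcols (hzero i)
    have hγlam : ∀ i, γ i = lam i := by
      intro i
      have h := h2 i i
      rw [hdiag, hστ i, hdiag] at h
      linarith
    refine ⟨fun i j => if j = σ i then (lam i : WithBot ℝ) else ⊥,
      ⟨σ, lam, fun i j => rfl⟩, ?_, ?_⟩
    · have hXY : (fun i j => lam i + E (σ i) j)
          = (fun i j => E i (σ.symm j) + lam (σ.symm j)) := by
        funext i j
        have hl := hcolF i j
        have hr := hrow i j
        rw [hστ i, hγlam i] at hr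
        show lam i + E (σ i) j = E i (σ.symm j) + lam (σ.symm j)
        linarith
      rw [mono_mul_emb E _ σ lam (fun i j => rfl), emb_mul_mono E _ σ lam (fun i j => rfl), hXY]
    · rw [emb_mul_mono E _ σ lam (fun i j => rfl)]
      exact congrArg emb (funext fun i => funext fun j => hcolF i j)
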